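/- Assume every path contains at least one link (for each j there exists i with B i j = 1), and assume there exists a feasible vector of path flows that is strictly positive in every coordinate. Then there exists exactly one strictly positive feasible vector of path flows f* maximizing U(f) = ∑_{j=1}^ρ log(f_j) over all strictly positive feasible vectors of path flows; consequently there is exactly one proportionally fair vector of path flows. -/

import Mathlib

open Finset

/-- A vector of path flows is feasible if it is nonnegative and respects the
link capacities. -/
def Feasible {η ρ : ℕ} (B : Fin η → Fin ρ → ℝ) (c : Fin η → ℝ)
    (f : Fin ρ → ℝ) : Prop :=
  (∀ j, 0 ≤ f j) ∧ ∀ i, ∑ j, B i j * f j ≤ c i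

/-- A strictly positive feasible vector of path flows is proportionally fair if
the sum of proportional changes towards any other feasible vector is
non-positive. -/
def ProportionallyFair {η ρ : ℕ} (B : Fin η → Fin ρ → ℝ) (c : Fin η → ℝ)
    (f : Fin ρ → ℝ) : Prop :=
  Feasible B c f ∧ (∀ j, 0 < f j) ∧
    ∀ g : Fin ρ → ℝ, Feasible B c g → ∑ j, (g j - f j) / f j ≤ 0

/-!
For positive `f` in a convex set `K`, maximizing `∑ j, log (f j)` over the positive points of `K`
is equivalent to the first-order condition `∑ j, (g j - f j) / f j ≤ 0` for all `g ∈ K`: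
necessity is Fermat's rule, sufficiency is `log x ≤ x - 1`. Adding this condition for `f`, `g`
to the one for `g`, `f` gives `∑ j, (g j - f j) ^ 2 / (f j * g j) ≤ 0`, hence uniqueness.
A maximizer exists because the feasible set is compact (every path uses a link) and the
continuous function `∏ j, f j`, unlike the utility, can be maximized on all of it.
-/

open Real

section LogUtility

variable {ι : Type*} [Fintype ι] {f g : ι → ℝ}

theorem log_sub_log_le_sub_div {a b : ℝ} (ha : 0 < a) (hb : 0 < b) :
    log b - log a ≤ (b - a) / a := by
  rw [sub_div, div_self ha.ne', ← log_div hb.ne' ha.ne']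
  exact log_le_sub_one_of_pos (div_pos hb ha)

theorem sum_log_le_of_sum_div_nonpos (hf : ∀ j, 0 < f j) (hg : ∀ j, 0 < g j)
    (hfg : ∑ j, (g j - f j) / f j ≤ 0) : ∑ j, log (g j) ≤ ∑ j, log (f j) := by
  have : ∑ j, (log (g j) - log (f j)) ≤ ∑ j, (g j - f j) / f j :=
    sum_le_sum fun j _ => log_sub_log_le_sub_div (hf j) (hg j)
  rw [sum_sub_distrib] at this
  linarith

theorem eq_of_sum_div_nonpos (hf : ∀ j, 0 < f j) (hg : ∀ j, 0 < g j)
    (hfg : ∑ j, (g j - f j) / f j ≤ 0) (hgf : ∑ j, (f j - g j) / g j ≤ 0) : f = g := by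
  have hterm : ∀ j, (g j - f j) / f j + (f j - g j) / g j = (g j - f j) ^ 2 / (f j * g j) := by
    intro j
    field_simp [(hf j).ne', (hg j).ne']
    ring
  have hnonneg : ∀ j ∈ univ, 0 ≤ (g j - f j) ^ 2 / (f j * g j) := fun j _ => by
    have := hf j; have := hg j; positivity
  have hsum : ∑ j, (g j - f j) ^ 2 / (f j * g j) = 0 := by
    refine le_antisymm ?_ (sum_nonneg hnonneg)
    simp only [← hterm, sum_add_distrib]
    linarith
  funext j
  have := (sum_eq_zero_iff_of_nonneg hnonneg).1 hsum j (mem_univ j)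
  rw [div_eq_zero_iff, sq_eq_zero_iff, sub_eq_zero] at this
  exact this.resolve_right (mul_pos (hf j) (hg j)).ne' |>.symm

theorem hasFDerivAt_sum_log (hf : ∀ j, 0 < f j) :
    HasFDerivAt (fun x : ι → ℝ => ∑ j, log (x j))
      (∑ j, (f j)⁻¹ • ContinuousLinearMap.proj (R := ℝ) (φ := fun _ : ι => ℝ) j) f :=
  HasFDerivAt.fun_sum fun j _ => (hasFDerivAt_apply j f).log (hf j).ne'

theorem eventually_nhds_forall_pos (hf : ∀ j, 0 < f j) : ∀ᶠ x in nhds f, ∀ j, 0 < x j :=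
  Filter.eventually_all.2 fun j =>
    continuousAt_const.eventually_lt (continuous_apply j).continuousAt (hf j)

theorem sum_div_nonpos_of_isMaxOn_sum_log {K : Set (ι → ℝ)} (hK : Convex ℝ K)
    (hf : ∀ j, 0 < f j) (hfK : f ∈ K)
    (hmax : ∀ g, (∀ j, 0 < g j) → g ∈ K → ∑ j, log (g j) ≤ ∑ j, log (f j)) (hg : g ∈ K) :
    ∑ j, (g j - f j) / f j ≤ 0 := by
  have hloc : IsLocalMaxOn (fun x : ι → ℝ => ∑ j, log (x j)) K f := by
    filter_upwards [self_mem_nhdsWithin, nhdsWithin_le_nhds (eventually_nhds_forall_pos hf)]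
      with x hxK hxpos using hmax x hxpos hxK
  have := hloc.hasFDerivWithinAt_nonpos (hasFDerivAt_sum_log hf).hasFDerivWithinAt
    (sub_mem_posTangentConeAt_of_segment_subset (hK.segment_subset hfK hg))
  simpa [div_eq_inv_mul] using this

end LogUtility

section Feasible

def IsLogUtilityMaximizer {η ρ : ℕ} (B : Fin η → Fin ρ → ℝ) (c : Fin η → ℝ)
    (f : Fin ρ → ℝ) : Prop :=
  (∀ j, 0 < f j) ∧ Feasible B c f ∧
    ∀ g : Fin ρ → ℝ, (∀ j, 0 < g j) → Feasible B c g → ∑ j, log (g j) ≤ ∑ j, log (f j)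

variable {η ρ : ℕ} {B : Fin η → Fin ρ → ℝ} {c : Fin η → ℝ}

theorem convex_setOf_feasible : Convex ℝ {f | Feasible B c f} := by
  rintro f ⟨hf₀, hf⟩ g ⟨hg₀, hg⟩ a b ha hb hab
  refine ⟨fun j => ?_, fun i => ?_⟩
  · have := hf₀ j
    have := hg₀ j
    simp only [Pi.add_apply, Pi.smul_apply, smul_eq_mul]
    positivity
  calc ∑ j, B i j * (a • f + b • g) j = a * ∑ j, B i j * f j + b * ∑ j, B i j * g j := by
        simp only [Pi.add_apply, Pi.smul_apply, smul_eq_mul, mul_sum, ← sum_add_distrib]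
        exact sum_congr rfl fun j _ => by ring
    _ ≤ a * c i + b * c i := by gcongr; exacts [hf i, hg i]
    _ = c i := by rw [← add_mul, hab, one_mul]

theorem isClosed_setOf_feasible : IsClosed {f | Feasible B c f} := by
  simp only [Feasible, Set.ofPred_and, Set.ofPred_forall]
  exact (isClosed_iInter fun j => isClosed_le continuous_const (continuous_apply j)).inter
    (isClosed_iInter fun i => isClosed_le (by fun_prop) continuous_const)

theorem Feasible.le_of_eq_one (hB : ∀ i j, 0 ≤ B i j) {f : Fin ρ → ℝ} (hf : Feasible B c f)
    {i : Fin η} {j : Fin ρ} (hij : B i j = 1) : f j ≤ c i :=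
  calc f j = B i j * f j := by rw [hij, one_mul]
    _ ≤ ∑ k, B i k * f k :=
      single_le_sum (f := fun k => B i k * f k) (fun k _ => mul_nonneg (hB i k) (hf.1 k))
        (mem_univ j)
    _ ≤ c i := hf.2 i

theorem isCompact_setOf_feasible (hB : ∀ i j, 0 ≤ B i j) (hlink : ∀ j, ∃ i, B i j = 1) :
    IsCompact {f | Feasible B c f} := by
  choose link hlink using hlink
  refine (isCompact_Icc (a := 0) (b := fun j => c (link j))).of_isClosed_subset
    isClosed_setOf_feasible fun f hf => ⟨hf.1, fun j => hf.le_of_eq_one hB (hlink j)⟩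

theorem exists_isLogUtilityMaximizer (hB : ∀ i j, 0 ≤ B i j) (hlink : ∀ j, ∃ i, B i j = 1)
    (hpos : ∃ f : Fin ρ → ℝ, (∀ j, 0 < f j) ∧ Feasible B c f) :
    ∃ f, IsLogUtilityMaximizer B c f := by
  obtain ⟨f₀, hf₀pos, hf₀⟩ := hpos
  obtain ⟨f, hf, hmax⟩ := (isCompact_setOf_feasible hB hlink).exists_isMaxOn ⟨f₀, hf₀⟩
    (continuous_finsetProd univ fun j _ => continuous_apply j).continuousOn
  have hprod : 0 < ∏ j, f j := (prod_pos fun j _ => hf₀pos j).trans_le (hmax hf₀)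
  have hfpos : ∀ j, 0 < f j := fun j =>
    (hf.1 j).lt_of_ne' fun h => hprod.ne' (prod_eq_zero (mem_univ j) h)
  refine ⟨f, hfpos, hf, fun g hgpos hg => ?_⟩
  rw [← log_prod fun j _ => (hgpos j).ne', ← log_prod fun j _ => (hfpos j).ne']
  exact log_le_log (prod_pos fun j _ => hgpos j) (hmax hg)

theorem IsLogUtilityMaximizer.proportionallyFair {f : Fin ρ → ℝ}
    (hf : IsLogUtilityMaximizer B c f) : ProportionallyFair B c f :=
  ⟨hf.2.1, hf.1, fun _ hg =>
    sum_div_nonpos_of_isMaxOn_sum_log convex_setOf_feasible hf.1 hf.2.1 hf.2.2 hg⟩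

theorem ProportionallyFair.isLogUtilityMaximizer {f : Fin ρ → ℝ}
    (hf : ProportionallyFair B c f) : IsLogUtilityMaximizer B c f :=
  ⟨hf.2.1, hf.1, fun g hgpos hg => sum_log_le_of_sum_div_nonpos hf.2.1 hgpos (hf.2.2 g hg)⟩

theorem ProportionallyFair.eq {f g : Fin ρ → ℝ} (hf : ProportionallyFair B c f)
    (hg : ProportionallyFair B c g) : f = g :=
  eq_of_sum_div_nonpos hf.2.1 hg.2.1 (hf.2.2 g hg.1) (hg.2.2 f hf.1)

end Feasible

theorem exists_unique_log_utility_maximizer_and_proportionally_fair_general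
    (η ρ : ℕ)
    (B : Fin η → Fin ρ → ℝ) (hB : ∀ i j, B i j = 0 ∨ B i j = 1)
    (c : Fin η → ℝ)
    (hlink : ∀ j, ∃ i, B i j = 1)
    (hpos_feas : ∃ f : Fin ρ → ℝ, (∀ j, 0 < f j) ∧ Feasible B c f) :
    (∃! f : Fin ρ → ℝ, (∀ j, 0 < f j) ∧ Feasible B c f ∧
       ∀ g : Fin ρ → ℝ, (∀ j, 0 < g j) → Feasible B c g →
         ∑ j, Real.log (g j) ≤ ∑ j, Real.log (f j)) ∧
    (∃! f : Fin ρ → ℝ, ProportionallyFair B c f) := by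
  have hB_nonneg : ∀ i j, 0 ≤ B i j := fun i j => by rcases hB i j with h | h <;> simp [h]
  obtain ⟨f, hf⟩ := exists_isLogUtilityMaximizer hB_nonneg hlink hpos_feas
  have hf_fair := hf.proportionallyFair
  exact ⟨⟨f, hf, fun g hg => (IsLogUtilityMaximizer.proportionallyFair hg).eq hf_fair⟩,
    ⟨f, hf_fair, fun g hg => hg.eq hf_fair⟩⟩

/-- If every path contains at least one link and some strictly positive
feasible vector of path flows exists, then there is exactly one strictly
positive feasible maximizer of `U(f) = ∑ j, log (f j)` over strictly positive
feasible vectors, and, consequently, exactly one proportionally fair vector of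
path flows. -/
theorem exists_unique_log_utility_maximizer_and_proportionally_fair
    (η ρ : ℕ) (hη : 0 < η) (hρ : 0 < ρ)
    (B : Fin η → Fin ρ → ℝ) (hB : ∀ i j, B i j = 0 ∨ B i j = 1)
    (c : Fin η → ℝ) (hc : ∀ i, 0 < c i)
    (hlink : ∀ j, ∃ i, B i j = 1)
    (hpos_feas : ∃ f : Fin ρ → ℝ, (∀ j, 0 < f j) ∧ Feasible B c f) :
    (∃! f : Fin ρ → ℝ, (∀ j, 0 < f j) ∧ Feasible B c f ∧
       ∀ g : Fin ρ → ℝ, (∀ j, 0 < g j) → Feasible B c g →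
         ∑ j, Real.log (g j) ≤ ∑ j, Real.log (f j)) ∧
    (∃! f : Fin ρ → ℝ, ProportionallyFair B c f) :=
  exists_unique_log_utility_maximizer_and_proportionally_fair_general η ρ B hB c hlink hpos_feas
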